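/- arXiv:1704.06943 — 3 statements merged into one kernel-verified Lean document; each statement's English description precedes it below -/
import Mathlib

section
/- Let a, b, s be natural numbers with a ≥ b ≥ s ≥ 1. Then a^a · b^b < (a+s)^{a+s} · (b−s)^{b−s}, with the convention 0^0 = 1. -/
/-!
Taking logarithms, `n ^ n` becomes `n * log n` (also at `n = 0`, where `0 ^ 0 = 1` and
`0 * log 0 = 0`), and `x ↦ x * log x` is strictly convex on `[0, ∞)`. For a strictly convex
function, pushing two points `b ≤ a` apart to `b - s` and `a + s` increases the sum of its
values, since the secant slope over `[b - s, b]` is smaller than the one over `[a, a + s]`.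
-/

theorem StrictConvexOn.add_lt_add_sub_add {𝕜 : Type*} [Field 𝕜] [LinearOrder 𝕜]
    [IsStrictOrderedRing 𝕜] {s : Set 𝕜} {f : 𝕜 → 𝕜} (hf : StrictConvexOn 𝕜 s f)
    {x y d : 𝕜} (hx : x - d ∈ s) (hy : y + d ∈ s) (hd : 0 < d) (hxy : x ≤ y) :
    f x + f y < f (x - d) + f (y + d) := by
  have key : (f x - f (x - d)) / (x - (x - d)) < (f (y + d) - f y) / (y + d - y) := by
    rcases hxy.eq_or_lt with rfl | hlt
    · exact hf.slope_strict_mono_adjacent hx hy (sub_lt_self x hd) (lt_add_of_pos_right x hd)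
    · have hxs : x ∈ s := hf.1.ordConnected.out hx hy ⟨by linarith, by linarith⟩
      have hys : y ∈ s := hf.1.ordConnected.out hx hy ⟨by linarith, by linarith⟩
      exact (hf.slope_strict_mono_adjacent hx hys (sub_lt_self x hd) hlt).trans
        (hf.slope_strict_mono_adjacent hxs hy hlt (lt_add_of_pos_right y hd))
  rw [sub_sub_cancel, add_sub_cancel_left, div_lt_div_iff_of_pos_right hd] at key
  linarith

theorem Nat.pow_self_mul_pow_self_lt_iff (a b c d : ℕ) :
    a ^ a * b ^ b < c ^ c * d ^ d ↔
      (a : ℝ) * Real.log a + b * Real.log b < c * Real.log c + d * Real.log d := by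
  have hpos (n : ℕ) : (0 : ℝ) < (n : ℝ) ^ n := by exact_mod_cast Nat.pow_self_pos
  rw [← Nat.cast_lt (α := ℝ)]
  push_cast
  rw [← Real.log_lt_log_iff (mul_pos (hpos a) (hpos b)) (mul_pos (hpos c) (hpos d)),
    Real.log_mul (hpos a).ne' (hpos b).ne', Real.log_mul (hpos c).ne' (hpos d).ne',
    Real.log_pow, Real.log_pow, Real.log_pow, Real.log_pow]

/-- The key numerical inequality in Lemma 4 (Wang): for natural numbers
`a ≥ b ≥ s ≥ 1` one has `a^a * b^b < (a+s)^(a+s) * (b-s)^(b-s)`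
(with the natural-number convention `0^0 = 1`). -/
theorem pow_self_mul_pow_self_lt (a b s : ℕ) (hs : 1 ≤ s) (hsb : s ≤ b)
    (hba : b ≤ a) :
    a ^ a * b ^ b < (a + s) ^ (a + s) * (b - s) ^ (b - s) := by
  rw [Nat.pow_self_mul_pow_self_lt_iff, Nat.cast_sub hsb, Nat.cast_add]
  have hconvex := Real.strictConvexOn_mul_log.add_lt_add_sub_add (x := b) (y := a) (d := s)
    (Set.mem_Ici.2 (sub_nonneg.2 (by exact_mod_cast hsb)))
    (Set.mem_Ici.2 (by positivity)) (by exact_mod_cast hs) (by exact_mod_cast hba)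
  linarith [hconvex]
end

section
/- Let n, k be natural numbers with 1 ≤ k ≤ n − 2, and let G be a connected finite simple graph on n vertices that has a vertex cut of size at most k (i.e., there is a set S of at most k vertices such that the subgraph of G induced on the complement of S is disconnected). Then Π₂(G) ≤ k^k · (n−1)^{k(n−1)} · (n−2)^{(n−2)(n−k−1)}, and equality holds if and only if G is isomorphic to K_n^k. -/
/-- The second multiplicative Zagreb index `Π₂(G) = ∏_{u ∈ V(G)} d(u)^{d(u)}`
(with the natural-number convention `0^0 = 1`). -/
noncomputable def multZagreb2 {V : Type*} [Fintype V] (G : SimpleGraph V) : ℕ :=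
  letI := Classical.decRel G.Adj
  ∏ v : V, (G.degree v) ^ (G.degree v)

/-- The graph `K_n^k`: the complete graph `K_{n-1}` (on the vertices `some a`)
together with one extra vertex (`none`) joined to exactly `k` vertices of
`K_{n-1}`. -/
def Knk (n k : ℕ) : SimpleGraph (Option (Fin (n - 1))) :=
  SimpleGraph.fromRel (fun x y =>
    match x, y with
    | some _, some _ => True
    | none, some a => (a : ℕ) < k
    | some a, none => (a : ℕ) < k
    | none, none => False)

/-!
Let `S` be a cut of exactly `k` vertices separating `A` from `B` (a smaller cut is enlarged by
vertices of `A ∪ B`, keeping both sides nonempty). Then `G` is a spanning subgraph of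
`K_S ∨ (K_A ∪ K_B)`, whose degrees are `k + |A| - 1` on `A`, `k + |B| - 1` on `B` and `n - 1` on
`S`, and `d ↦ d ^ d` is monotone. With `a = |A| - 1`, the `A`-factor of `Π₂` is `exp (φ (k + a))`
for `φ x = x (x + 1 - k) log x`, which is strictly convex on `[k, ∞)`; so for fixed `|A| + |B|`
the product of the two side factors is largest exactly when one side is a single vertex, and then
the graph is `K_n^k`. In the equality case `G` has all the degrees of `K_S ∨ (K_A ∪ K_B)`, hence
equals it; connectedness rules out the one coincidence `0 ^ 0 = 1 ^ 1`.
-/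

section Convexity

open Real Set

theorem StrictConvexOn.map_add_add_lt {s : Set ℝ} {f : ℝ → ℝ} (hf : StrictConvexOn ℝ s f)
    {x a b : ℝ} (hx : x ∈ s) (hy : x + a + b ∈ s) (ha : 0 < a) (hb : 0 < b) :
    f (x + a) + f (x + b) < f x + f (x + a + b) := by
  have hab : 0 < a + b := add_pos ha hb
  have hne : x ≠ x + a + b := by linarith
  set t := a / (a + b) with ht
  have ht₀ : 0 < t := div_pos ha hab
  have ht₁ : 0 < 1 - t := by rw [ht, one_sub_div hab.ne']; exact div_pos (by linarith) hab
  have h₁ := hf.2 hx hy hne ht₁ ht₀ (by ring)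
  have h₂ := hf.2 hx hy hne ht₀ ht₁ (by ring)
  simp only [smul_eq_mul] at h₁ h₂
  rw [show (1 - t) * x + t * (x + a + b) = x + a by rw [ht]; field_simp; ring] at h₁
  rw [show t * x + (1 - t) * (x + a + b) = x + b by rw [ht]; field_simp; ring] at h₂
  linarith

noncomputable def sideLogFactor (c x : ℝ) : ℝ := x * (x + 1 - c) * log x

lemma hasDerivAt_sideLogFactor (c : ℝ) {x : ℝ} (hx : 0 < x) :
    HasDerivAt (sideLogFactor c) ((2 * x + 1 - c) * log x + (x + 1 - c)) x := by
  have := ((hasDerivAt_id' x).mul (((hasDerivAt_id' x).add_const 1).sub_const c)).mul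
    (hasDerivAt_log hx.ne')
  exact this.congr_deriv (by simp only [Pi.mul_apply]; field_simp; ring)

lemma strictConvexOn_sideLogFactor {c : ℝ} (hc : 1 ≤ c) :
    StrictConvexOn ℝ (Ici c) (sideLogFactor c) := by
  have hderiv : ∀ x ∈ Ioi c, deriv (sideLogFactor c) x = (2 * x + 1 - c) * log x + (x + 1 - c) :=
    fun x hx => (hasDerivAt_sideLogFactor c (by rw [mem_Ioi] at hx; linarith)).deriv
  refine StrictMonoOn.strictConvexOn_of_deriv (convex_Ici c) (fun x hx =>
    (hasDerivAt_sideLogFactor c (by rw [mem_Ici] at hx; linarith)).continuousAt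
      |>.continuousWithinAt) ?_
  rw [interior_Ici]
  intro x hx y hy hxy
  rw [hderiv x hx, hderiv y hy]
  rw [mem_Ioi] at hx
  have hlog : 0 < log x := log_pos (by linarith)
  have hlog' : log x < log y := log_lt_log (by linarith) hxy
  nlinarith

/-- The contribution to `Π₂` of a side of `a + 1` vertices of degree `k + a`. -/
def sideFactor (k a : ℕ) : ℕ := (k + a) ^ ((k + a) * (a + 1))

lemma log_sideFactor (k a : ℕ) : log (sideFactor k a) = sideLogFactor k (k + a) := by
  simp only [sideFactor, sideLogFactor, Nat.cast_pow, Real.log_pow]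
  push_cast
  ring

lemma sideFactor_pos {k : ℕ} (hk : 1 ≤ k) (a : ℕ) : 0 < sideFactor k a :=
  Nat.pow_pos (by omega)

lemma sideFactor_mul_lt {k a b : ℕ} (hk : 1 ≤ k) (ha : 0 < a) (hb : 0 < b) :
    sideFactor k a * sideFactor k b < sideFactor k 0 * sideFactor k (a + b) := by
  have key := (strictConvexOn_sideLogFactor (c := k) (by exact_mod_cast hk)).map_add_add_lt
    self_mem_Ici (by rw [mem_Ici, add_assoc]; exact le_add_of_nonneg_right (by positivity))
    (Nat.cast_pos.2 ha) (Nat.cast_pos.2 hb)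
  have hpos : ∀ c, (0 : ℝ) < sideFactor k c := fun c => by exact_mod_cast sideFactor_pos hk c
  rw [← Nat.cast_lt (α := ℝ), ← log_lt_log_iff (by push_cast; exact mul_pos (hpos _) (hpos _))
    (by push_cast; exact mul_pos (hpos _) (hpos _))]
  push_cast
  rw [log_mul (hpos _).ne' (hpos _).ne', log_mul (hpos _).ne' (hpos _).ne', log_sideFactor,
    log_sideFactor, log_sideFactor, log_sideFactor]
  push_cast
  simpa only [add_zero, add_assoc] using key

end Convexity

open Finset

lemma sideFactor_mul_le {k : ℕ} (hk : 1 ≤ k) (a b : ℕ) :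
    sideFactor k a * sideFactor k b ≤ sideFactor k 0 * sideFactor k (a + b) := by
  rcases Nat.eq_zero_or_pos a with rfl | ha
  · simp
  rcases Nat.eq_zero_or_pos b with rfl | hb
  · simp [mul_comm]
  exact (sideFactor_mul_lt hk ha hb).le

lemma sideFactor_mul_eq_iff {k a b : ℕ} (hk : 1 ≤ k) :
    sideFactor k a * sideFactor k b = sideFactor k 0 * sideFactor k (a + b) ↔ a = 0 ∨ b = 0 := by
  refine ⟨fun h => ?_, ?_⟩
  · by_contra! hab
    exact (sideFactor_mul_lt hk (Nat.pos_of_ne_zero hab.1) (Nat.pos_of_ne_zero hab.2)).ne h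
  · rintro (rfl | rfl) <;> simp [mul_comm]

def vertexCutBound (n k : ℕ) : ℕ :=
  k ^ k * (n - 1) ^ (k * (n - 1)) * (n - 2) ^ ((n - 2) * (n - k - 1))

lemma vertexCutBound_eq {n k a b : ℕ} (hn : n = a + b + k + 2) :
    vertexCutBound n k =
      sideFactor k 0 * sideFactor k (a + b) * (a + b + k + 1) ^ ((a + b + k + 1) * k) := by
  subst hn
  rw [vertexCutBound, sideFactor, sideFactor, show a + b + k + 2 - 1 = a + b + k + 1 by omega,
    show a + b + k + 2 - 2 = k + (a + b) by omega, show a + b + k + 2 - k - 1 = a + b + 1 by omega]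
  ring

lemma Nat.pow_self_le_pow_self {x y : ℕ} (h : x ≤ y) : x ^ x ≤ y ^ y := by
  rcases Nat.eq_zero_or_pos x with rfl | hx
  · exact Nat.pow_self_pos
  · exact (Nat.pow_le_pow_left h x).trans (Nat.pow_le_pow_right (hx.trans_le h) h)

lemma Nat.pow_self_lt_pow_self {x y : ℕ} (hx : 0 < x) (h : x < y) : x ^ x < y ^ y :=
  (Nat.pow_le_pow_left h.le x).trans_lt (Nat.pow_lt_pow_right (by omega) h)

lemma Fin.card_filter_le_val (m k : ℕ) : #{a : Fin m | k ≤ (a : ℕ)} = m - k := by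
  rw [← card_map Fin.valEmbedding, ← Nat.card_Ico k m]
  congr 1
  ext i
  simp only [mem_map, mem_filter, mem_univ, true_and, Fin.valEmbedding_apply, mem_Ico]
  exact ⟨by rintro ⟨a, h, rfl⟩; exact ⟨h, a.2⟩, fun h => ⟨⟨i, h.2⟩, h.1, rfl⟩⟩

lemma card_subtype_decide_mem_eq {V : Type*} [Fintype V] [DecidableEq V] (A B : Finset V)
    (p q : Bool) : Fintype.card {v // (decide (v ∈ A), decide (v ∈ B)) = (p, q)} =
      #((if p then A else Aᶜ) ∩ (if q then B else Bᶜ)) := by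
  rw [Fintype.card_subtype]
  congr 1
  ext v
  cases p <;> cases q <;> simp

lemma Finset.exists_subset_subset_card_add_eq {V : Type*} {A B : Finset V} (hA : A.Nonempty)
    (hB : B.Nonempty) {m : ℕ} (hm : 2 ≤ m) (hAB : m ≤ #A + #B) :
    ∃ A' ⊆ A, ∃ B' ⊆ B, A'.Nonempty ∧ B'.Nonempty ∧ #A' + #B' = m := by
  have := hA.card_pos
  have := hB.card_pos
  obtain ⟨A', hA', hcardA⟩ := exists_subset_card_eq (s := A) (n := min #A (m - 1)) (min_le_left ..)
  obtain ⟨B', hB', hcardB⟩ := exists_subset_card_eq (s := B) (n := m - min #A (m - 1)) (by omega)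
  exact ⟨A', hA', B', hB', card_pos.1 (by omega), card_pos.1 (by omega), by omega⟩

namespace SimpleGraph

section MultZagreb

variable {V W : Type*} [Fintype V] [Fintype W] {G H : SimpleGraph V}

lemma multZagreb2_eq_prod [DecidableRel G.Adj] :
    multZagreb2 G = ∏ v, G.degree v ^ G.degree v := by
  unfold multZagreb2
  congr!

lemma Iso.multZagreb2_eq {G' : SimpleGraph W} (e : G ≃g G') :
    multZagreb2 G = multZagreb2 G' := by
  classical
  rw [multZagreb2_eq_prod, multZagreb2_eq_prod, ← e.toEquiv.prod_comp]
  simp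

lemma multZagreb2_mono (h : G ≤ H) : multZagreb2 G ≤ multZagreb2 H := by
  classical
  rw [multZagreb2_eq_prod, multZagreb2_eq_prod]
  exact prod_le_prod' fun v _ => Nat.pow_self_le_pow_self (degree_le_of_le h)

lemma eq_of_le_of_multZagreb2_eq (h : G ≤ H) (hG : ∀ v, ¬ G.IsIsolated v)
    (heq : multZagreb2 G = multZagreb2 H) : G = H := by
  classical
  have hdeg : ∀ v, G.degree v = H.degree v := by
    by_contra! ⟨v, hv⟩
    refine heq.not_lt ?_
    rw [multZagreb2_eq_prod, multZagreb2_eq_prod]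
    exact prod_lt_prod (fun w _ => Nat.pow_self_pos)
      (fun w _ => Nat.pow_self_le_pow_self (degree_le_of_le h))
      ⟨v, mem_univ v, Nat.pow_self_lt_pow_self ((degree_pos ..).2 (hG v))
        ((degree_le_of_le h).lt_of_ne hv)⟩
  ext v w
  have hsub : G.neighborFinset v ⊆ H.neighborFinset v := fun u hu => by
    simpa using h ((mem_neighborFinset ..).1 hu)
  have := Finset.eq_of_subset_of_card_le hsub
    (by rw [card_neighborFinset_eq_degree, card_neighborFinset_eq_degree, hdeg])
  simpa using congrArg (w ∈ ·) this

end MultZagreb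

section MaxSeparated

variable {V W : Type*}

/-- `K_S ∨ (K_A ∪ K_B)` for `S = (A ∪ B)ᶜ`: the largest graph with no edge between `A` and `B`. -/
@[simps]
def maxSeparated (A B : Finset V) : SimpleGraph V where
  Adj x y := x ≠ y ∧ ¬ (x ∈ A ∧ y ∈ B) ∧ ¬ (x ∈ B ∧ y ∈ A)
  symm := ⟨fun _ _ h => ⟨h.1.symm, fun h' => h.2.2 h'.symm, fun h' => h.2.1 h'.symm⟩⟩
  loopless := ⟨fun _ h => h.1 rfl⟩

variable {A B A' B' : Finset V}

instance [DecidableEq V] : DecidableRel (maxSeparated A B).Adj :=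
  fun x y => inferInstanceAs (Decidable (x ≠ y ∧ ¬ (x ∈ A ∧ y ∈ B) ∧ ¬ (x ∈ B ∧ y ∈ A)))

lemma maxSeparated_comm : maxSeparated A B = maxSeparated B A := by
  ext x y
  simp only [maxSeparated_adj]
  tauto

lemma maxSeparated_anti (hA : A' ⊆ A) (hB : B' ⊆ B) : maxSeparated A B ≤ maxSeparated A' B' :=
  fun _ _ h => ⟨h.1, fun h' => h.2.1 ⟨hA h'.1, hB h'.2⟩, fun h' => h.2.2 ⟨hB h'.1, hA h'.2⟩⟩

lemma Knk_eq_maxSeparated (n k : ℕ) :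
    Knk n k =
      maxSeparated {none} ((univ.filter fun a : Fin (n - 1) => k ≤ (a : ℕ)).map .some) := by
  ext x y
  rcases x with _ | a <;> rcases y with _ | b <;> simp [Knk]

variable [Fintype V] [Fintype W] [DecidableEq V]

lemma degree_maxSeparated_of_mem_left (hAB : Disjoint A B) {v : V} (hv : v ∈ A) :
    (maxSeparated A B).degree v = Fintype.card V - 1 - #B := by
  have hvB : v ∉ B := Finset.disjoint_left.1 hAB hv
  have : (maxSeparated A B).neighborFinset v = (univ.erase v) \ B := by
    ext w
    simp [hv, hvB, eq_comm]
  rw [← card_neighborFinset_eq_degree, this,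
    card_sdiff_of_subset (fun w hw => mem_erase.2 ⟨by rintro rfl; exact hvB hw, mem_univ w⟩),
    card_erase_of_mem (mem_univ v), card_univ]

lemma degree_maxSeparated_of_mem_right (hAB : Disjoint A B) {v : V} (hv : v ∈ B) :
    (maxSeparated A B).degree v = Fintype.card V - 1 - #A := by
  convert degree_maxSeparated_of_mem_left hAB.symm hv using 2
  exact maxSeparated_comm

lemma degree_maxSeparated_of_notMem {v : V} (hA : v ∉ A) (hB : v ∉ B) :
    (maxSeparated A B).degree v = Fintype.card V - 1 := by
  have : (maxSeparated A B).neighborFinset v = univ.erase v := by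
    ext w
    simp [hA, hB, eq_comm]
  rw [← card_neighborFinset_eq_degree, this, card_erase_of_mem (mem_univ v), card_univ]

lemma multZagreb2_maxSeparated (hAB : Disjoint A B) {a b k : ℕ} (hA : #A = a + 1)
    (hB : #B = b + 1) (hV : Fintype.card V = a + b + k + 2) :
    multZagreb2 (maxSeparated A B) =
      sideFactor k a * sideFactor k b * (a + b + k + 1) ^ ((a + b + k + 1) * k) := by
  have prod_of_degree_eq : ∀ (s : Finset V) (d : ℕ), (∀ v ∈ s, (maxSeparated A B).degree v = d) →
      ∏ v ∈ s, (maxSeparated A B).degree v ^ (maxSeparated A B).degree v = d ^ (d * #s) :=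
    fun s d h => by rw [prod_eq_pow_card fun v hv => by rw [h v hv], pow_mul]
  have hS : #(A ∪ B)ᶜ = k := by
    rw [card_compl, card_union_of_disjoint hAB]; omega
  rw [multZagreb2_eq_prod, ← prod_mul_prod_compl (A ∪ B), prod_union hAB,
    prod_of_degree_eq A (k + a) fun v hv => by rw [degree_maxSeparated_of_mem_left hAB hv]; omega,
    prod_of_degree_eq B (k + b) fun v hv => by rw [degree_maxSeparated_of_mem_right hAB hv]; omega,
    prod_of_degree_eq _ (a + b + k + 1) fun v hv => by
      rw [Finset.mem_compl, Finset.mem_union, not_or] at hv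
      rw [degree_maxSeparated_of_notMem hv.1 hv.2]; omega,
    hA, hB, hS, sideFactor, sideFactor]

lemma multZagreb2_maxSeparated_le {k : ℕ} (hk : 1 ≤ k) (hAB : Disjoint A B) (hA : A.Nonempty)
    (hB : B.Nonempty) (hcard : #A + #B + k = Fintype.card V) :
    multZagreb2 (maxSeparated A B) ≤ vertexCutBound (Fintype.card V) k ∧
      (multZagreb2 (maxSeparated A B) = vertexCutBound (Fintype.card V) k ↔ #A = 1 ∨ #B = 1) := by
  obtain ⟨a, ha⟩ : ∃ a, #A = a + 1 := Nat.exists_eq_add_one.2 hA.card_pos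
  obtain ⟨b, hb⟩ : ∃ b, #B = b + 1 := Nat.exists_eq_add_one.2 hB.card_pos
  have hV : Fintype.card V = a + b + k + 2 := by omega
  have hpos : 0 < (a + b + k + 1) ^ ((a + b + k + 1) * k) := Nat.pow_pos (by omega)
  rw [multZagreb2_maxSeparated hAB ha hb hV, vertexCutBound_eq hV, Nat.mul_left_inj hpos.ne',
    sideFactor_mul_eq_iff hk, ha, hb]
  exact ⟨Nat.mul_le_mul_right _ (sideFactor_mul_le hk a b), by omega⟩

lemma multZagreb2_Knk {n k : ℕ} (hkn : k + 2 ≤ n) :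
    multZagreb2 (Knk n k) = vertexCutBound n k := by
  rw [Knk_eq_maxSeparated, multZagreb2_maxSeparated (a := 0) (b := n - k - 2) (k := k)
    (disjoint_singleton_left.2 (by simp)) (card_singleton _)
    (by rw [card_map, Fin.card_filter_le_val]; omega) (by simp; omega),
    vertexCutBound_eq (a := 0) (b := n - k - 2) (by omega), zero_add]

lemma nonempty_iso_maxSeparated [DecidableEq W] {A' B' : Finset W} (hAB : Disjoint A B)
    (hAB' : Disjoint A' B') (hA : #A = #A') (hB : #B = #B')
    (hV : Fintype.card V = Fintype.card W) :
    Nonempty (maxSeparated A B ≃g maxSeparated A' B') := by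
  have hfiber : ∀ c : Bool × Bool, Fintype.card {v // (decide (v ∈ A), decide (v ∈ B)) = c} =
      Fintype.card {w // (decide (w ∈ A'), decide (w ∈ B')) = c} := by
    rintro ⟨p, q⟩
    rw [card_subtype_decide_mem_eq, card_subtype_decide_mem_eq]
    cases p <;> cases q <;> simp only [Bool.false_eq_true, ↓reduceIte]
    · rw [← compl_union, ← compl_union, card_compl, card_compl, card_union_of_disjoint hAB,
        card_union_of_disjoint hAB', hA, hB, hV]
    · rw [inter_comm, ← sdiff_eq_inter_compl, sdiff_eq_self_of_disjoint hAB.symm,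
        inter_comm, ← sdiff_eq_inter_compl, sdiff_eq_self_of_disjoint hAB'.symm, hB]
    · rw [← sdiff_eq_inter_compl, sdiff_eq_self_of_disjoint hAB, ← sdiff_eq_inter_compl,
        sdiff_eq_self_of_disjoint hAB', hA]
    · rw [disjoint_iff_inter_eq_empty.1 hAB, disjoint_iff_inter_eq_empty.1 hAB', card_empty,
        card_empty]
  let e := Equiv.ofFiberEquiv fun c => Fintype.equivOfCardEq (hfiber c)
  have he : ∀ v, (decide (e v ∈ A'), decide (e v ∈ B')) = (decide (v ∈ A), decide (v ∈ B)) :=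
    Equiv.ofFiberEquiv_map (g := fun w => (decide (w ∈ A'), decide (w ∈ B'))) _
  have heA : ∀ v, e v ∈ A' ↔ v ∈ A := fun v => by simpa using congrArg Prod.fst (he v)
  have heB : ∀ v, e v ∈ B' ↔ v ∈ B := fun v => by simpa using congrArg Prod.snd (he v)
  exact ⟨⟨e, by simp [heA, heB, e.injective.ne_iff]⟩⟩

lemma nonempty_iso_Knk {k : ℕ} (hAB : Disjoint A B) (hA : #A = 1)
    (hcard : #A + #B + k = Fintype.card V) :
    Nonempty (maxSeparated A B ≃g Knk (Fintype.card V) k) := by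
  rw [Knk_eq_maxSeparated]
  exact nonempty_iso_maxSeparated hAB (disjoint_singleton_left.2 (by simp)) (by simp [hA])
    (by rw [card_map, Fin.card_filter_le_val]; omega) (by simp; omega)

end MaxSeparated

section VertexCut

variable {V : Type*} [Fintype V] {G : SimpleGraph V}

lemma exists_le_maxSeparated_of_not_connected_induce {S : Finset V}
    (hS : #S < Fintype.card V) (h : ¬ (G.induce (S : Set V)ᶜ).Connected) :
    ∃ A B : Finset V, Disjoint A B ∧ A.Nonempty ∧ B.Nonempty ∧ #A + #B + #S = Fintype.card V ∧
      G ≤ maxSeparated A B := by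
  classical
  obtain ⟨v, -, hv⟩ := exists_mem_notMem_of_card_lt_card (t := univ) hS
  have hpre : ¬ (G.induce (S : Set V)ᶜ).Preconnected :=
    fun hp => h ((connected_iff _).2 ⟨hp, ⟨⟨v, hv⟩⟩⟩)
  simp only [Preconnected, not_forall] at hpre
  obtain ⟨u, w, huw⟩ := hpre
  let reach (x : V) : Prop := ∃ hx : x ∉ S, (G.induce (S : Set V)ᶜ).Reachable u ⟨x, hx⟩
  have hcross : ∀ x y, G.Adj x y → x ∈ Sᶜ.filter reach → y ∉ Sᶜ.filter (¬ reach ·) := by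
    intro x y hxy hx hy
    obtain ⟨-, hxS, hux⟩ := mem_filter.1 hx
    obtain ⟨hyS, hy⟩ := mem_filter.1 hy
    exact hy ⟨mem_compl.1 hyS, hux.trans (Adj.reachable (G := G.induce _) hxy)⟩
  refine ⟨Sᶜ.filter reach, Sᶜ.filter (¬ reach ·), disjoint_filter_filter_not _ _ _,
    ⟨u, mem_filter.2 ⟨mem_compl.2 u.2, u.2, .rfl⟩⟩,
    ⟨w, mem_filter.2 ⟨mem_compl.2 w.2, fun ⟨_, huw'⟩ => huw huw'⟩⟩, ?_,
    fun x y hxy => ⟨hxy.ne, fun h => hcross x y hxy h.1 h.2, fun h => hcross y x hxy.symm h.2 h.1⟩⟩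
  rw [← card_union_of_disjoint (disjoint_filter_filter_not _ _ _), filter_union_filter_not_eq,
    card_compl, Nat.sub_add_cancel (card_le_univ S)]

lemma exists_le_maxSeparated_of_vertexCut {k : ℕ} (hk : k + 2 ≤ Fintype.card V)
    (hcut : ∃ S : Finset V, #S ≤ k ∧ ¬ (G.induce (S : Set V)ᶜ).Connected) :
    ∃ A B : Finset V, Disjoint A B ∧ A.Nonempty ∧ B.Nonempty ∧ #A + #B + k = Fintype.card V ∧
      G ≤ maxSeparated A B := by
  obtain ⟨S, hSk, hS⟩ := hcut
  obtain ⟨A, B, hAB, hA, hB, hcard, hGAB⟩ :=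
    exists_le_maxSeparated_of_not_connected_induce (by omega) hS
  obtain ⟨A', hA', B', hB', hA'ne, hB'ne, hcard'⟩ :=
    exists_subset_subset_card_add_eq hA hB (m := Fintype.card V - k) (by omega) (by omega)
  exact ⟨A', B', disjoint_of_subset_left hA' (disjoint_of_subset_right hB' hAB), hA'ne, hB'ne,
    by omega, hGAB.trans (maxSeparated_anti hA' hB')⟩

end VertexCut

end SimpleGraph

open SimpleGraph

/-- **Theorem 1 for `Π₂` (Wang).** If `1 ≤ k ≤ n - 2` and `G` is a connected
graph on `n` vertices having a vertex cut of size at most `k`, then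
`Π₂(G) ≤ k^k (n-1)^{k(n-1)} (n-2)^{(n-2)(n-k-1)}`, with equality iff
`G ≅ K_n^k`. -/
theorem multZagreb2_le_of_vertexCut {V : Type*} [Fintype V] (n k : ℕ)
    (hk : 1 ≤ k) (hkn : k ≤ n - 2)
    (G : SimpleGraph V) (hV : Fintype.card V = n) (hG : G.Connected)
    (hcut : ∃ S : Finset V, S.card ≤ k ∧ ¬ (G.induce ((S : Set V)ᶜ)).Connected) :
    multZagreb2 G ≤
        k ^ k * (n - 1) ^ (k * (n - 1)) * (n - 2) ^ ((n - 2) * (n - k - 1)) ∧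
      (multZagreb2 G =
          k ^ k * (n - 1) ^ (k * (n - 1)) * (n - 2) ^ ((n - 2) * (n - k - 1)) ↔
        Nonempty (G ≃g Knk n k)) := by
  classical
  subst hV
  change multZagreb2 G ≤ vertexCutBound _ k ∧ (multZagreb2 G = vertexCutBound _ k ↔ _)
  obtain ⟨A, B, hAB, hA, hB, hcard, hGAB⟩ := exists_le_maxSeparated_of_vertexCut (by omega) hcut
  obtain ⟨hle, heq⟩ := multZagreb2_maxSeparated_le hk hAB hA hB hcard
  refine ⟨(multZagreb2_mono hGAB).trans hle, fun h => ?_,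
    fun ⟨e⟩ => e.multZagreb2_eq.trans (multZagreb2_Knk (by omega))⟩
  have : Nontrivial V := Fintype.one_lt_card_iff_nontrivial.1 (by omega)
  obtain rfl : G = maxSeparated A B := eq_of_le_of_multZagreb2_eq hGAB
    hG.preconnected.not_isIsolated (le_antisymm (multZagreb2_mono hGAB) (h ▸ hle))
  rcases heq.1 h with hA₁ | hB₁
  · exact nonempty_iso_Knk hAB hA₁ hcard
  · rw [maxSeparated_comm]
    exact nonempty_iso_Knk hAB.symm hB₁ (by omega)
end

section
/- Let G be a connected finite simple graph on n ≥ 2 vertices. Then Π₂(G) ≥ 4^{n−2}, and equality holds if and only if G is isomorphic to the path P_n. -/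
open Finset SimpleGraph

section Aux

variable {V : Type*}

lemma pow4_aux {d : ℕ} (hd : 1 ≤ d) : 4 ^ (d - 1) ≤ d ^ d := by
  match d, hd with
  | 1, _ => norm_num
  | 2, _ => norm_num
  | 3, _ => norm_num
  | (m+4), _ =>
    calc 4 ^ (m + 4 - 1) = 4 ^ (m + 3) := by norm_num
    _ ≤ (m + 4) ^ (m + 3) := Nat.pow_le_pow_left (by omega) _
    _ ≤ (m + 4) ^ (m + 4) := Nat.pow_le_pow_right (by omega) (by omega)

lemma pow4_aux_lt {d : ℕ} (hd : 3 ≤ d) : 4 ^ (d - 1) < d ^ d := by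
  match d, hd with
  | 3, _ => norm_num
  | (m+4), _ =>
    calc 4 ^ (m + 4 - 1) = 4 ^ (m + 3) := by norm_num
    _ ≤ (m + 4) ^ (m + 3) := Nat.pow_le_pow_left (by omega) _
    _ < (m + 4) ^ (m + 4) := Nat.pow_lt_pow_right (by omega) (by omega)

lemma mem_of_closed (G : SimpleGraph V) {S : Set V} (hS : ∀ x ∈ S, ∀ y, G.Adj x y → y ∈ S)
    {v w : V} (p : G.Walk v w) (hv : v ∈ S) : w ∈ S := by
  induction p with
  | nil => exact hv
  | cons hab q ih => exact ih (hS _ hv _ hab)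

end Aux

section NF

variable {V : Type*} [Fintype V] [DecidableEq V] (G : SimpleGraph V) [DecidableRel G.Adj]

lemma nf_eq_single {v a : V} (h1 : G.degree v = 1) (ha : G.Adj v a) :
    G.neighborFinset v = {a} := by
  refine (Finset.eq_of_subset_of_card_le ?_ ?_).symm
  · exact Finset.singleton_subset_iff.2 ((SimpleGraph.mem_neighborFinset _ _ _).2 ha)
  · rw [card_neighborFinset_eq_degree, h1, Finset.card_singleton]

lemma nf_eq_pair {v a b : V} (h2 : G.degree v ≤ 2) (ha : G.Adj v a) (hb : G.Adj v b)
    (hab : a ≠ b) : G.neighborFinset v = {a, b} := by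
  refine (Finset.eq_of_subset_of_card_le ?_ ?_).symm
  · intro x hx
    rcases Finset.mem_insert.1 hx with rfl | hx
    · exact (SimpleGraph.mem_neighborFinset _ _ _).2 ha
    · rw [Finset.mem_singleton] at hx; subst hx; exact (SimpleGraph.mem_neighborFinset _ _ _).2 hb
  · rw [card_neighborFinset_eq_degree, Finset.card_insert_of_notMem (by simpa using hab),
      Finset.card_singleton]
    exact h2

lemma card_le_card_edge (hG : G.Connected) :
    Fintype.card V ≤ G.edgeFinset.card + 1 := by
  have hne : Nonempty V := hG.nonempty
  inhabit V
  choose p hp using fun v => (hG.preconnected v default).exists_walk_length_eq_dist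
  have hcard : (Finset.univ.erase (default : V)).card ≤ G.edgeFinset.card := by
    apply Finset.card_le_card_of_injOn (fun v => s(v, (p v).getVert 1))
    · intro v hv
      have hvne : v ≠ default := Finset.ne_of_mem_erase hv
      have hadj : G.Adj v ((p v).getVert 1) :=
        (p v).adj_snd (SimpleGraph.Walk.not_nil_of_ne hvne)
      exact SimpleGraph.mem_edgeFinset.2 hadj
    · intro a ha b hb hab
      by_contra hne2
      rw [Sym2.eq_iff] at hab
      rcases hab with ⟨rfl, _⟩ | ⟨h1, h2⟩
      · exact hne2 rfl
      -- h1 : a = (p b).getVert 1, h2 : (p a).getVert 1 = b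
      have hanil : ¬ (p a).Nil := SimpleGraph.Walk.not_nil_of_ne (Finset.ne_of_mem_erase ha)
      have hbnil : ¬ (p b).Nil := SimpleGraph.Walk.not_nil_of_ne (Finset.ne_of_mem_erase hb)
      have hta : G.dist ((p a).getVert 1) default ≤ (p a).tail.length := SimpleGraph.dist_le _
      have htb : G.dist ((p b).getVert 1) default ≤ (p b).tail.length := SimpleGraph.dist_le _
      have hta2 : G.dist b default ≤ (p a).tail.length :=
        le_trans (le_of_eq (by rw [h2])) hta
      have htb2 : G.dist a default ≤ (p b).tail.length :=
        le_trans (le_of_eq (by rw [h1])) htb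
      have hla : (p a).tail.length + 1 = (p a).length := SimpleGraph.Walk.length_tail_add_one hanil
      have hlb : (p b).tail.length + 1 = (p b).length := SimpleGraph.Walk.length_tail_add_one hbnil
      have hpa := hp a
      have hpb := hp b
      omega
  have : (Finset.univ.erase (default : V)).card = Fintype.card V - 1 := by
    rw [Finset.card_erase_of_mem (Finset.mem_univ _), Finset.card_univ]
  have hpos : 0 < Fintype.card V := Fintype.card_pos
  omega

end NF

section Chain

variable {V : Type*} [DecidableEq V]

noncomputable def chain (G : SimpleGraph V) (v0 : V) : ℕ → V × Finset V
  | 0 => (v0, {v0})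
  | (k+1) =>
    let p := chain G v0 k
    letI := Classical.propDecidable (∃ y, G.Adj p.1 y ∧ y ∉ p.2)
    if h : ∃ y, G.Adj p.1 y ∧ y ∉ p.2 then (h.choose, insert h.choose p.2) else p

lemma chain_succ_of_ex {G : SimpleGraph V} {v0 : V} {k : ℕ}
    (h : ∃ y, G.Adj (chain G v0 k).1 y ∧ y ∉ (chain G v0 k).2) :
    chain G v0 (k+1) = (h.choose, insert h.choose (chain G v0 k).2) := by
  rw [chain]
  exact dif_pos h

end Chain

section Construction

variable {V : Type*} [Fintype V] [DecidableEq V]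

lemma exists_iso_path {G : SimpleGraph V} [DecidableRel G.Adj]
    {n : ℕ} (hn : 2 ≤ n) (hV : Fintype.card V = n) (hG : G.Connected)
    (hdeg2 : ∀ v, G.degree v ≤ 2) (hE : G.edgeFinset.card + 1 = n) :
    Nonempty (G ≃g SimpleGraph.pathGraph n) := by
  have hdeg1 : ∀ v, 1 ≤ G.degree v := by
    intro v
    obtain ⟨w, hw⟩ := Fintype.exists_ne_of_one_lt_card (by omega) v
    obtain ⟨q⟩ := hG.preconnected v w
    have hq : ¬ q.Nil := SimpleGraph.Walk.not_nil_of_ne (Ne.symm hw)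
    exact (G.degree_pos_iff_exists_adj v).2 ⟨_, q.adj_snd hq⟩
  obtain ⟨v0, hv0⟩ : ∃ v0, G.degree v0 = 1 := by
    by_contra hc
    push_neg at hc
    have h2 : ∀ v : V, G.degree v = 2 := fun v => by
      have := hdeg1 v; have := hdeg2 v; have := hc v; omega
    have hsum := G.sum_degrees_eq_twice_card_edges
    rw [Finset.sum_congr rfl (fun v _ => h2 v), Finset.sum_const, Finset.card_univ, hV] at hsum
    simp only [smul_eq_mul] at hsum
    omega
  set f : ℕ → V := fun k => (chain G v0 k).1 with hf
  set S : ℕ → Finset V := fun k => (chain G v0 k).2 with hS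
  have hf0 : f 0 = v0 := rfl
  have key : ∀ k, k ≤ n - 1 →
      (∀ i, i ≤ k → ∀ j, j ≤ k → f i = f j → i = j) ∧
      (∀ i, i < k → G.Adj (f i) (f (i+1))) ∧
      (S k = (Finset.range (k+1)).image f) := by
    intro k
    induction k with
    | zero =>
      intro _
      refine ⟨fun i hi j hj _ => by omega, fun i hi => by omega, ?_⟩
      show (chain G v0 0).2 = _
      simp only [chain, Finset.range_one, Finset.image_singleton]
      rfl
    | succ k ih =>
      intro hk1
      obtain ⟨hinj, hadj, hSk⟩ := ih (by omega)
      have hcard : (S k).card = k + 1 := by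
        rw [hSk, Finset.card_image_of_injOn, Finset.card_range]
        intro i hi j hj hij
        rw [Finset.coe_range, Set.mem_Iio] at hi hj
        exact hinj i (by omega) j (by omega) hij
      have hmemS : ∀ i, i ≤ k → f i ∈ S k := by
        intro i hi
        rw [hSk]
        exact Finset.mem_image_of_mem f (Finset.mem_range.2 (by omega))
      have hex : ∃ y, G.Adj (f k) y ∧ y ∉ S k := by
        by_contra hno
        push_neg at hno
        have hclosed : ∀ x ∈ (S k : Set V), ∀ y, G.Adj x y → y ∈ (S k : Set V) := by
          intro x hx y hxy
          rw [Finset.mem_coe, hSk] at hx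
          obtain ⟨i, hi, rfl⟩ := Finset.mem_image.1 hx
          rw [Finset.mem_range] at hi
          rcases Nat.lt_or_ge i k with hik | hik
          · -- i < k : interior or start
            match i, hik with
            | 0, hik =>
              have hnf : G.neighborFinset (f 0) = {f 1} :=
                nf_eq_single G (hf0 ▸ hv0) (hadj 0 hik)
              have : y ∈ G.neighborFinset (f 0) := (SimpleGraph.mem_neighborFinset _ _ _).2 hxy
              rw [hnf, Finset.mem_singleton] at this
              exact Finset.mem_coe.2 (this ▸ hmemS 1 (by omega))
            | (m+1), hik =>
              have hnf : G.neighborFinset (f (m+1)) = {f m, f (m+2)} := by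
                refine nf_eq_pair G (hdeg2 _) (hadj m (by omega)).symm (hadj (m+1) (by omega)) ?_
                intro hcon
                have := hinj m (by omega) (m+2) (by omega) hcon
                omega
              have : y ∈ G.neighborFinset (f (m+1)) := (SimpleGraph.mem_neighborFinset _ _ _).2 hxy
              rw [hnf, Finset.mem_insert, Finset.mem_singleton] at this
              rcases this with rfl | rfl
              · exact Finset.mem_coe.2 (hmemS m (by omega))
              · exact Finset.mem_coe.2 (hmemS (m+2) (by omega))
          · have : i = k := by omega
            subst this
            exact Finset.mem_coe.2 (hno y hxy)
        have hall : ∀ w : V, w ∈ S k := by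
          intro w
          obtain ⟨q⟩ := hG.preconnected v0 w
          exact Finset.mem_coe.1 (mem_of_closed G hclosed q (Finset.mem_coe.2 (hmemS 0 (by omega))))
        have : Fintype.card V ≤ (S k).card :=
          Finset.card_le_card (fun w _ => hall w) |>.trans_eq' (by rw [Finset.card_univ])
        omega
      have hchain := chain_succ_of_ex (G := G) (v0 := v0) (k := k) hex
      have hfk1 : f (k+1) = hex.choose := congrArg Prod.fst hchain
      have hSk1 : S (k+1) = insert (f (k+1)) (S k) := by
        rw [hfk1]; exact congrArg Prod.snd hchain
      have hnotmem : f (k+1) ∉ S k := by rw [hfk1]; exact hex.choose_spec.2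
      have hadjk : G.Adj (f k) (f (k+1)) := by rw [hfk1]; exact hex.choose_spec.1
      refine ⟨?_, ?_, ?_⟩
      · intro i hi j hj hij
        rcases Nat.lt_or_ge i (k+1) with hik | hik
        · rcases Nat.lt_or_ge j (k+1) with hjk | hjk
          · exact hinj i (by omega) j (by omega) hij
          · exfalso
            have : j = k + 1 := by omega
            subst this
            exact hnotmem (hij ▸ hmemS i (by omega))
        · have hi' : i = k + 1 := by omega
          subst hi'
          rcases Nat.lt_or_ge j (k+1) with hjk | hjk
          · exact absurd (hij ▸ hmemS j (by omega)) hnotmem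
          · omega
      · intro i hi
        rcases Nat.lt_or_ge i k with hik | hik
        · exact hadj i hik
        · have : i = k := by omega
          subst this
          exact hadjk
      · rw [hSk1, hSk, ← Finset.image_insert, ← Finset.range_add_one]
  obtain ⟨hinj, hadj, _⟩ := key (n-1) le_rfl
  have hinj' : Function.Injective (fun i : Fin n => f i.val) := by
    intro i j hij
    exact Fin.ext (hinj i.val (by omega) j.val (by omega) hij)
  have hbij : Function.Bijective (fun i : Fin n => f i.val) :=
    (Fintype.bijective_iff_injective_and_card _).2 ⟨hinj', by simp [hV]⟩
  have aux : ∀ i j : ℕ, i < n - 1 → j ≤ n - 1 → G.Adj (f i) (f j) → (i + 1 = j ∨ j + 1 = i) := by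
    intro i j hi hj hadjij
    match i, hi with
    | 0, hi =>
      have hnf : G.neighborFinset (f 0) = {f 1} := nf_eq_single G (hf0 ▸ hv0) (hadj 0 hi)
      have : f j ∈ G.neighborFinset (f 0) := (SimpleGraph.mem_neighborFinset _ _ _).2 hadjij
      rw [hnf, Finset.mem_singleton] at this
      have := hinj j hj 1 (by omega) this
      omega
    | (m+1), hi =>
      have hnf : G.neighborFinset (f (m+1)) = {f m, f (m+2)} := by
        refine nf_eq_pair G (hdeg2 _) (hadj m (by omega)).symm (hadj (m+1) (by omega)) ?_
        intro hcon
        have := hinj m (by omega) (m+2) (by omega) hcon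
        omega
      have : f j ∈ G.neighborFinset (f (m+1)) := (SimpleGraph.mem_neighborFinset _ _ _).2 hadjij
      rw [hnf, Finset.mem_insert, Finset.mem_singleton] at this
      rcases this with h | h
      · have := hinj j hj m (by omega) h
        omega
      · have := hinj j hj (m+2) (by omega) h
        omega
  have main_adj : ∀ i j : Fin n, G.Adj (f i.val) (f j.val) ↔ (SimpleGraph.pathGraph n).Adj i j := by
    intro i j
    rw [SimpleGraph.pathGraph_adj]
    have hi := i.isLt
    have hj := j.isLt
    constructor
    · intro h
      rcases Nat.lt_or_ge i.val (n-1) with hi' | hi'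
      · exact (aux i.val j.val hi' (by omega) h).imp id id
      · have hival : i.val = n - 1 := by omega
        have hj' : j.val < n - 1 := by
          rcases Nat.lt_or_ge j.val (n-1) with h' | h'
          · exact h'
          · exfalso
            have : i = j := Fin.ext (by omega)
            subst this
            exact G.irrefl h
        rcases aux j.val i.val hj' (by omega) h.symm with h' | h'
        · right; exact h'.symm ▸ h'
        · left; exact h'
    · rintro (h | h)
      · have := hadj i.val (by omega)
        rwa [h] at this
      · have := hadj j.val (by omega)
        rw [h] at this
        exact this.symm
  exact ⟨((⟨Equiv.ofBijective _ hbij, fun {a b} => main_adj a b⟩ :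
    SimpleGraph.pathGraph n ≃g G)).symm⟩

end Construction

section PathGraph

lemma pathGraph_degree {n : ℕ} (hn : 2 ≤ n) [DecidableRel (SimpleGraph.pathGraph n).Adj]
    (v : Fin n) :
    (SimpleGraph.pathGraph n).degree v = if v.val = 0 ∨ v.val = n - 1 then 1 else 2 := by
  by_cases h0 : v.val = 0
  · rw [if_pos (Or.inl h0), ← SimpleGraph.card_neighborFinset_eq_degree]
    have hnf : (SimpleGraph.pathGraph n).neighborFinset v = {(⟨1, by omega⟩ : Fin n)} := by
      ext u
      simp only [SimpleGraph.mem_neighborFinset, SimpleGraph.pathGraph_adj,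
        Finset.mem_singleton, Fin.ext_iff]
      have := u.isLt
      omega
    rw [hnf, Finset.card_singleton]
  · by_cases h1 : v.val = n - 1
    · rw [if_pos (Or.inr h1), ← SimpleGraph.card_neighborFinset_eq_degree]
      have hnf : (SimpleGraph.pathGraph n).neighborFinset v = {(⟨n - 2, by omega⟩ : Fin n)} := by
        ext u
        simp only [SimpleGraph.mem_neighborFinset, SimpleGraph.pathGraph_adj,
          Finset.mem_singleton, Fin.ext_iff]
        have := u.isLt
        have := v.isLt
        omega
      rw [hnf, Finset.card_singleton]
    · rw [if_neg (by tauto), ← SimpleGraph.card_neighborFinset_eq_degree]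
      have hvlt := v.isLt
      have hnf : (SimpleGraph.pathGraph n).neighborFinset v =
          {(⟨v.val - 1, by omega⟩ : Fin n), (⟨v.val + 1, by omega⟩ : Fin n)} := by
        ext u
        simp only [SimpleGraph.mem_neighborFinset, SimpleGraph.pathGraph_adj,
          Finset.mem_insert, Finset.mem_singleton, Fin.ext_iff]
        have := u.isLt
        omega
      rw [hnf, Finset.card_insert_of_notMem (by simp only [Finset.mem_singleton, Fin.ext_iff]; omega),
        Finset.card_singleton]

lemma multZagreb2_pathGraph {n : ℕ} (hn : 2 ≤ n) :
    multZagreb2 (SimpleGraph.pathGraph n) = 4 ^ (n - 2) := by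
  letI : DecidableRel (SimpleGraph.pathGraph n).Adj := Classical.decRel _
  have hmz : multZagreb2 (SimpleGraph.pathGraph n) =
      ∏ v : Fin n, (SimpleGraph.pathGraph n).degree v ^ (SimpleGraph.pathGraph n).degree v := rfl
  rw [hmz, Finset.prod_congr rfl (fun v _ => by rw [pathGraph_degree hn v])]
  have hpow : ∀ v : Fin n,
      (((if v.val = 0 ∨ v.val = n - 1 then 1 else 2) : ℕ) ^
        ((if v.val = 0 ∨ v.val = n - 1 then 1 else 2) : ℕ)) =
      if v.val = 0 ∨ v.val = n - 1 then 1 else 4 :=fun v => by split <;> norm_num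
  rw [Finset.prod_congr rfl (fun v _ => hpow v), Finset.prod_ite, Finset.prod_const,
    Finset.prod_const, one_pow, one_mul]
  congr 1
  have hPcard : (Finset.univ.filter (fun v : Fin n => v.val = 0 ∨ v.val = n - 1)).card = 2 := by
    have heq : Finset.univ.filter (fun v : Fin n => v.val = 0 ∨ v.val = n - 1) =
        {(⟨0, by omega⟩ : Fin n), (⟨n - 1, by omega⟩ : Fin n)} := by
      ext u
      simp only [Finset.mem_filter, Finset.mem_univ, true_and, Finset.mem_insert,
        Finset.mem_singleton, Fin.ext_iff]
    rw [heq, Finset.card_insert_of_notMem (by simp only [Finset.mem_singleton, Fin.ext_iff]; omega),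
      Finset.card_singleton]
  have htot := Finset.card_filter_add_card_filter_not
    (s := (Finset.univ : Finset (Fin n))) (p := fun v : Fin n => v.val = 0 ∨ v.val = n - 1)
  rw [Finset.card_univ, Fintype.card_fin] at htot
  omega

end PathGraph

lemma multZagreb2_iso {V W : Type*} [Fintype V] [Fintype W] {G : SimpleGraph V}
    {H : SimpleGraph W} (e : G ≃g H) : multZagreb2 G = multZagreb2 H := by
  letI : DecidableRel G.Adj := Classical.decRel G.Adj
  letI : DecidableRel H.Adj := Classical.decRel H.Adj
  have hdeg : ∀ v : V, G.degree v = H.degree (e v) := by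
    intro v
    rw [← SimpleGraph.card_neighborSet_eq_degree, ← SimpleGraph.card_neighborSet_eq_degree]
    exact Fintype.card_congr (e.mapNeighborSet v)
  show (∏ v : V, G.degree v ^ G.degree v) = ∏ w : W, H.degree w ^ H.degree w
  rw [← Equiv.prod_comp e.toEquiv (fun w => H.degree w ^ H.degree w)]
  exact Finset.prod_congr rfl fun v _ => by rw [hdeg v]; rfl

/-- **Theorem 3 for `Π₂` (Wang).** A connected graph `G` on `n ≥ 2` vertices
satisfies `Π₂(G) ≥ 4^{n-2}`, with equality iff `G` is the path `P_n`. -/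
theorem multZagreb2_ge_path {V : Type*} [Fintype V] (n : ℕ) (hn : 2 ≤ n)
    (G : SimpleGraph V) (hV : Fintype.card V = n) (hG : G.Connected) :
    4 ^ (n - 2) ≤ multZagreb2 G ∧
      (multZagreb2 G = 4 ^ (n - 2) ↔
        Nonempty (G ≃g SimpleGraph.pathGraph n)) := by
  letI : DecidableRel G.Adj := Classical.decRel G.Adj
  classical
  have hmz : multZagreb2 G = ∏ v, G.degree v ^ G.degree v := rfl
  have hdeg1 : ∀ v, 1 ≤ G.degree v := by
    intro v
    obtain ⟨w, hw⟩ := Fintype.exists_ne_of_one_lt_card (by omega) v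
    obtain ⟨q⟩ := hG.preconnected v w
    exact (G.degree_pos_iff_exists_adj v).2
      ⟨_, q.adj_snd (SimpleGraph.Walk.not_nil_of_ne (Ne.symm hw))⟩
  have hEge : n ≤ G.edgeFinset.card + 1 := hV ▸ card_le_card_edge G hG
  have hsum := G.sum_degrees_eq_twice_card_edges
  have hsplit : ∑ v, G.degree v = (∑ v, (G.degree v - 1)) + n := by
    calc ∑ v, G.degree v = ∑ v, ((G.degree v - 1) + 1) :=
          Finset.sum_congr rfl (fun v _ => by have := hdeg1 v; omega)
    _ = (∑ v, (G.degree v - 1)) + ∑ _v : V, 1 := Finset.sum_add_distrib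
    _ = (∑ v, (G.degree v - 1)) + n := by
          rw [Finset.sum_const, Finset.card_univ, hV, smul_eq_mul, mul_one]
  set s := ∑ v, (G.degree v - 1) with hsdef
  have hprod4 : (4:ℕ) ^ s = ∏ v, 4 ^ (G.degree v - 1) :=
    (Finset.prod_pow_eq_pow_sum _ _ _).symm
  have hle : ∏ v, (4:ℕ) ^ (G.degree v - 1) ≤ ∏ v, G.degree v ^ G.degree v :=
    Finset.prod_le_prod' (fun v _ => pow4_aux (hdeg1 v))
  have hs_ge : n - 2 ≤ s := by omega
  have hineq : 4 ^ (n - 2) ≤ multZagreb2 G := by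
    rw [hmz]
    calc (4:ℕ) ^ (n - 2) ≤ 4 ^ s := Nat.pow_le_pow_right (by norm_num) hs_ge
    _ = ∏ v, 4 ^ (G.degree v - 1) := hprod4
    _ ≤ ∏ v, G.degree v ^ G.degree v := hle
  refine ⟨hineq, ?_, ?_⟩
  · intro heq
    have hdeg2 : ∀ v, G.degree v ≤ 2 := by
      by_contra hc
      push_neg at hc
      obtain ⟨v, hv⟩ := hc
      have hstrict : ∏ v, (4:ℕ) ^ (G.degree v - 1) < ∏ v, G.degree v ^ G.degree v :=
        Finset.prod_lt_prod (fun i _ => pow_pos (by norm_num) _)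
          (fun i _ => pow4_aux (hdeg1 i)) ⟨v, Finset.mem_univ v, pow4_aux_lt (by omega)⟩
      have hcon : (4:ℕ) ^ (n - 2) < 4 ^ (n - 2) := by
        calc (4:ℕ) ^ (n - 2) ≤ 4 ^ s := Nat.pow_le_pow_right (by norm_num) hs_ge
        _ = ∏ v, 4 ^ (G.degree v - 1) := hprod4
        _ < ∏ v, G.degree v ^ G.degree v := hstrict
        _ = multZagreb2 G := hmz.symm
        _ = 4 ^ (n - 2) := heq
      omega
    have hs_le : s ≤ n - 2 := by
      have h4 : (4:ℕ) ^ s ≤ 4 ^ (n - 2) := by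
        calc (4:ℕ) ^ s = ∏ v, 4 ^ (G.degree v - 1) := hprod4
        _ ≤ ∏ v, G.degree v ^ G.degree v := hle
        _ = multZagreb2 G := hmz.symm
        _ = 4 ^ (n - 2) := heq
      exact (Nat.pow_le_pow_iff_right (by norm_num)).1 h4
    have hseq : s = n - 2 := le_antisymm hs_le hs_ge
    have hEeq : G.edgeFinset.card + 1 = n := by omega
    exact exists_iso_path hn hV hG hdeg2 hEeq
  · rintro ⟨e⟩
    rw [multZagreb2_iso e, multZagreb2_pathGraph hn]
end
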